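/- For every k ≥ 1 there exists n such that the equation a.aⁿ = a^{n+1} (an instance of the distribution law) is not derivable in equational logic from the structural congruence axioms together with only the first k distribution axioms D₁,…,D_k. In particular, one may take any n > k with n+1 prime. -/

import Mathlib

/-- CCS visible actions: a name `a` or a coname `ā`. -/
inductive Act where
  | inp : ℕ → Act
  | out : ℕ → Act
deriving DecidableEq

/-- The coaction. -/
def Act.co : Act → Act
  | .inp a => .out a
  | .out a => .inp a

/-- MicroCCS processes: nil, prefix, parallel composition. -/
inductive Proc where
  | nil : Proc
  | pre : Act → Proc → Proc
  | par : Proc → Proc → Proc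
deriving DecidableEq

/-- Transition labels: a visible action or τ. -/
inductive Lab where
  | act : Act → Lab
  | tau : Lab
deriving DecidableEq

/-- The standard CCS labelled transition system on microCCS. -/
inductive Step : Proc → Lab → Proc → Prop where
  | pre (η : Act) (P : Proc) : Step (.pre η P) (.act η) P
  | syn {P P' Q Q' : Proc} {η : Act} :
      Step P (.act η) P' → Step Q (.act η.co) Q' →
      Step (.par P Q) .tau (.par P' Q')
  | parL {P P' : Proc} {μ : Lab} (Q : Proc) :
      Step P μ P' → Step (.par P Q) μ (.par P' Q)
  | parR {Q Q' : Proc} {μ : Lab} (P : Proc) :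
      Step Q μ Q' → Step (.par P Q) μ (.par P Q')

/-- A (symmetric) bisimulation. -/
def IsBisim (R : Proc → Proc → Prop) : Prop :=
  (∀ P Q, R P Q → R Q P) ∧
  ∀ P Q μ P', R P Q → Step P μ P' → ∃ Q', Step Q μ Q' ∧ R P' Q'

/-- Strong bisimilarity: the union of all bisimulations. -/
def Bisim (P Q : Proc) : Prop := ∃ R, IsBisim R ∧ R P Q

/-- The size of a process: its number of prefixes. -/
def Proc.size : Proc → ℕ
  | .nil => 0
  | .pre _ P => 1 + P.size
  | .par P Q => P.size + Q.size

/-- Structural congruence: abelian monoid laws for parallel composition. -/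
inductive SC : Proc → Proc → Prop where
  | refl (P) : SC P P
  | symm : SC P Q → SC Q P
  | trans : SC P Q → SC Q R → SC P R
  | comm (P Q) : SC (.par P Q) (.par Q P)
  | assoc (P Q R) : SC (.par P (.par Q R)) (.par (.par P Q) R)
  | unit (P) : SC (.par P .nil) P
  | pre (η) : SC P Q → SC (.pre η P) (.pre η Q)
  | par : SC P P' → SC Q Q' → SC (.par P Q) (.par P' Q')

/-- `pow P k` is the k-fold parallel composition of `P`. -/
def pow (P : Proc) : ℕ → Proc
  | 0 => .nil
  | n+1 => .par P (pow P n)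

/-- One step of rewriting with the distribution law
    `η.(P ‖ (η.P)^k) ⇝ (η.P)^{k+1}` (k ≥ 1), modulo structural
    congruence, in any context. -/
inductive RW : Proc → Proc → Prop where
  | head {η : Act} {P : Proc} {k : ℕ} (hk : 1 ≤ k) :
      RW (.pre η (.par P (pow (.pre η P) k))) (pow (.pre η P) (k+1))
  | pre (η) : RW P P' → RW (.pre η P) (.pre η P')
  | parL (Q) : RW P P' → RW (.par P Q) (.par P' Q)
  | parR (P) : RW Q Q' → RW (.par P Q) (.par P Q')
  | congr : SC P P₁ → RW P₁ P₂ → SC P₂ P' → RW P P'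

/-- Reflexive-transitive closure of the distribution rewriting. -/
def Rws : Proc → Proc → Prop := Relation.ReflTransGen RW

/-- Normal forms for the distribution rewriting. -/
def NF (P : Proc) : Prop := ¬ ∃ P', RW P P'

/-- Prime processes. -/
def IsPrime (P : Proc) : Prop :=
  ¬ Bisim P .nil ∧ ∀ Q R, Bisim P (.par Q R) → Bisim Q .nil ∨ Bisim R .nil

/-- Equational derivability on processes from structural congruence axioms
    together with only the first `k` distribution axiom schemas
    `Dᵢ : η.(P ‖ (η.P)^i) = (η.P)^{i+1}`, `1 ≤ i ≤ k`. -/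
inductive DkEq (k : ℕ) : Proc → Proc → Prop where
  | refl (P) : DkEq k P P
  | symm : DkEq k P Q → DkEq k Q P
  | trans : DkEq k P Q → DkEq k Q R → DkEq k P R
  | comm (P Q) : DkEq k (.par P Q) (.par Q P)
  | assoc (P Q R) : DkEq k (.par P (.par Q R)) (.par (.par P Q) R)
  | unit (P) : DkEq k (.par P .nil) P
  | pre (η) : DkEq k P Q → DkEq k (.pre η P) (.pre η Q)
  | par : DkEq k P P' → DkEq k Q Q' → DkEq k (.par P Q) (.par P' Q')
  | dist {η : Act} (P : Proc) {i : ℕ} (h1 : 1 ≤ i) (h2 : i ≤ k) :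
      DkEq k (.pre η (.par P (pow (.pre η P) i))) (pow (.pre η P) (i+1))

/-!
Interpret processes in `ℕ`: `0` is `0`, `‖` is `+`, and every prefix is `x ↦ x + 1`, except that
it is `x ↦ 0` when `p ∣ x + 1`. For a prime `p > k + 1` this interpretation validates the
structural laws and `D₁, …, D_k`, since `(i + 1)(x + 1)` is then divisible by `p` only if `x + 1`
is. With `p = n + 1` it sends `a.aⁿ` to `0` but `a^{n+1}` to `n + 1`. The two sides are
nevertheless bisimilar: a process with a single action `η` cannot synchronise (as `η.co ≠ η`),
so it can only do `η`, losing one prefix, and can do so as long as it has a prefix; its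
behaviour is determined by its size.
-/

theorem Act.co_ne (η : Act) : η.co ≠ η := by
  cases η <;> simp [Act.co]

theorem Proc.size_pow (P : Proc) (n : ℕ) : (pow P n).size = n * P.size := by
  induction n with
  | zero => simp [pow, Proc.size]
  | succ n ih => simp only [pow, Proc.size, ih]; ring

section Interpretation

variable {M : Type*} [AddCommMonoid M] (f : M → M)

def Proc.interp : Proc → M
  | .nil => 0
  | .pre _ P => f P.interp
  | .par P Q => P.interp + Q.interp

theorem Proc.interp_pow (P : Proc) (n : ℕ) : (pow P n).interp f = n • P.interp f := by
  induction n with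
  | zero => simp [pow, Proc.interp]
  | succ n ih => simp only [pow, Proc.interp, ih, succ_nsmul']

variable {f}

theorem DkEq.interp_eq {k : ℕ}
    (hf : ∀ i, 1 ≤ i → i ≤ k → ∀ x, f (x + i • f x) = (i + 1) • f x)
    {P Q : Proc} (h : DkEq k P Q) : P.interp f = Q.interp f := by
  induction h with
  | refl => rfl
  | symm _ ih => exact ih.symm
  | trans _ _ ih₁ ih₂ => exact ih₁.trans ih₂
  | comm => exact add_comm _ _
  | assoc => exact (add_assoc _ _ _).symm
  | unit => exact add_zero _
  | pre η _ ih => simp only [Proc.interp, ih]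
  | par _ _ ih₁ ih₂ => simp only [Proc.interp, ih₁, ih₂]
  | dist P h₁ h₂ =>
    simp only [Proc.interp, Proc.interp_pow]
    exact hf _ h₁ h₂ _

end Interpretation

def succUnlessDvd (p x : ℕ) : ℕ := if p ∣ x + 1 then 0 else x + 1

theorem succUnlessDvd_distrib {p i : ℕ} (hp : p.Prime) (hi : i + 1 < p) (x : ℕ) :
    succUnlessDvd p (x + i • succUnlessDvd p x) = (i + 1) • succUnlessDvd p x := by
  by_cases hx : p ∣ x + 1
  · simp [succUnlessDvd, hx]
  · have hmul : ¬ p ∣ (i + 1) * (x + 1) := fun hd =>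
      (hp.dvd_mul.1 hd).elim (fun h => absurd (Nat.le_of_dvd (by omega) h) (by omega)) hx
    have hsum : x + i * (x + 1) + 1 = (i + 1) * (x + 1) := by ring
    simp [succUnlessDvd, hx, hsum, hmul]

theorem not_dkEq_pre_pow {k n : ℕ} (η : Act) (hkn : k < n) (hp : (n + 1).Prime) :
    ¬ DkEq k (.pre η (pow (.pre η .nil) n)) (pow (.pre η .nil) (n + 1)) := by
  intro h
  have hinterp := h.interp_eq (f := succUnlessDvd (n + 1))
    fun i _ hik x => succUnlessDvd_distrib hp (by omega) x
  have hatom : (Proc.pre η .nil).interp (succUnlessDvd (n + 1)) = 1 := by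
    simp [Proc.interp, succUnlessDvd]
    omega
  rw [Proc.interp, Proc.interp_pow, Proc.interp_pow, hatom] at hinterp
  simp [succUnlessDvd] at hinterp

inductive Proc.OnlyAct (η : Act) : Proc → Prop
  | nil : Proc.OnlyAct η .nil
  | pre {P : Proc} : Proc.OnlyAct η P → Proc.OnlyAct η (.pre η P)
  | par {P Q : Proc} : Proc.OnlyAct η P → Proc.OnlyAct η Q → Proc.OnlyAct η (.par P Q)

namespace Proc.OnlyAct

variable {η : Act}

theorem pow {P : Proc} (hP : P.OnlyAct η) (n : ℕ) : (_root_.pow P n).OnlyAct η := by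
  induction n with
  | zero => exact nil
  | succ n ih => exact par hP ih

theorem step {P P' : Proc} {μ : Lab} (hs : Step P μ P') (hP : P.OnlyAct η) :
    μ = .act η ∧ P'.OnlyAct η ∧ P'.size + 1 = P.size := by
  induction hs with
  | pre =>
    cases hP with
    | pre hP => exact ⟨rfl, hP, by simp only [Proc.size]; omega⟩
  | syn _ _ ih₁ ih₂ =>
    cases hP with
    | par hP hQ =>
      obtain ⟨rfl⟩ := (ih₁ hP).1
      exact absurd (Lab.act.inj (ih₂ hQ).1) (Act.co_ne _)
  | parL Q _ ih =>
    cases hP with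
    | par hP hQ =>
      obtain ⟨rfl, hP', hsize⟩ := ih hP
      exact ⟨rfl, par hP' hQ, by simp only [Proc.size]; omega⟩
  | parR P _ ih =>
    cases hP with
    | par hP hQ =>
      obtain ⟨rfl, hQ', hsize⟩ := ih hQ
      exact ⟨rfl, par hP hQ', by simp only [Proc.size]; omega⟩

theorem exists_step {P : Proc} (hP : P.OnlyAct η) (hsize : 0 < P.size) :
    ∃ P', Step P (.act η) P' := by
  induction hP with
  | nil => simp [Proc.size] at hsize
  | pre => exact ⟨_, Step.pre _ _⟩
  | @par P Q _ _ ihP ihQ =>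
    rcases Nat.eq_zero_or_pos P.size with hP0 | hPpos
    · obtain ⟨Q', hQ'⟩ := ihQ (by simp only [Proc.size] at hsize; omega)
      exact ⟨_, Step.parR P hQ'⟩
    · obtain ⟨P', hP'⟩ := ihP hPpos
      exact ⟨_, Step.parL Q hP'⟩

theorem bisim {P Q : Proc} (hP : P.OnlyAct η) (hQ : Q.OnlyAct η) (hsize : P.size = Q.size) :
    Bisim P Q := by
  refine ⟨fun P Q => P.OnlyAct η ∧ Q.OnlyAct η ∧ P.size = Q.size, ⟨?_, ?_⟩, hP, hQ, hsize⟩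
  · rintro P Q ⟨hP, hQ, hsize⟩
    exact ⟨hQ, hP, hsize.symm⟩
  · rintro P Q μ P' ⟨hP, hQ, hsize⟩ hs
    obtain ⟨rfl, hP', hsizeP⟩ := step hs hP
    obtain ⟨Q', hs'⟩ := exists_step hQ (by omega)
    obtain ⟨-, hQ', hsizeQ⟩ := step hs' hQ
    exact ⟨Q', hs', hP', hQ', by omega⟩

end Proc.OnlyAct

theorem bisim_pre_pow (η : Act) (n : ℕ) :
    Bisim (.pre η (pow (.pre η .nil) n)) (pow (.pre η .nil) (n + 1)) := by
  have hatom : (Proc.pre η .nil).OnlyAct η := .pre .nil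
  refine (hatom.pow n).pre.bisim (hatom.pow (n + 1)) ?_
  simp only [Proc.size, Proc.size_pow]
  ring

theorem dist_instances_independent_general (k : ℕ) (a : ℕ) :
    (∃ n : ℕ,
      Bisim (.pre (.inp a) (pow (.pre (.inp a) .nil) n))
            (pow (.pre (.inp a) .nil) (n+1)) ∧
      ¬ DkEq k (.pre (.inp a) (pow (.pre (.inp a) .nil) n))
               (pow (.pre (.inp a) .nil) (n+1))) ∧
    (∀ n : ℕ, k < n → Nat.Prime (n+1) →
      ¬ DkEq k (.pre (.inp a) (pow (.pre (.inp a) .nil) n))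
               (pow (.pre (.inp a) .nil) (n+1))) := by
  refine ⟨?_, fun n hkn hp => not_dkEq_pre_pow _ hkn hp⟩
  obtain ⟨p, hkp, hp⟩ := Nat.exists_infinite_primes (k + 2)
  have hp' : (p - 1 + 1).Prime := by rwa [Nat.sub_add_cancel (by omega)]
  exact ⟨p - 1, bisim_pre_pow _ _, not_dkEq_pre_pow _ (by omega) hp'⟩

/-- for every `k ≥ 1` there is `n` such that the (sound)
    instance `a.aⁿ = a^{n+1}` of the distribution law is not derivable from
    `𝒟_k`; in particular one may take any `n > k` with `n+1` prime. -/
theorem dist_instances_independent (k : ℕ) (hk : 1 ≤ k) (a : ℕ) :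
    (∃ n : ℕ,
      Bisim (.pre (.inp a) (pow (.pre (.inp a) .nil) n))
            (pow (.pre (.inp a) .nil) (n+1)) ∧
      ¬ DkEq k (.pre (.inp a) (pow (.pre (.inp a) .nil) n))
               (pow (.pre (.inp a) .nil) (n+1))) ∧
    (∀ n : ℕ, k < n → Nat.Prime (n+1) →
      ¬ DkEq k (.pre (.inp a) (pow (.pre (.inp a) .nil) n))
               (pow (.pre (.inp a) .nil) (n+1))) :=
  dist_instances_independent_general k a
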